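/- arXiv:1311.0331 — 2 statements merged into one kernel-verified Lean document; each statement's English description precedes it below -/
import Mathlib

section
/- For every ordinal α with 1 ≤ α < ω₁ there exists a family ℋ ⊆ 𝒫(ℕ) that is Wadge complete for D_α(𝒫(ℕ)) (ℋ ∈ D_α(𝒫(ℕ)) and every member of D_α(𝒫(ℕ)) is Wadge reducible to ℋ) but not one-to-one Wadge complete: some 𝒳 ∈ D_α(𝒫(ℕ)) admits no injective continuous reduction to ℋ. -/
open Topology

/-- The Scott topology on 𝒫(ℕ), generated by the basic open sets
`B_A = {X : A ⊆ X}` for finite `A ⊆ ℕ`. -/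
def ScottPN : TopologicalSpace (Set ℕ) :=
  TopologicalSpace.generateFrom
    {O : Set (Set ℕ) | ∃ A : Set ℕ, A.Finite ∧ O = {X : Set ℕ | A ⊆ X}}

/-- An ordinal is even if its canonical decomposition `λ + n`
(`λ` zero or a limit, `n < ω`) has `n` even. -/
def OrdEven (o : Ordinal) : Prop :=
  ∃ (l : Ordinal) (n : ℕ), (l = 0 ∨ Order.IsSuccLimit l) ∧ o = l + 2 * n

/-- Two ordinals have the same parity. -/
def SameParity (a b : Ordinal) : Prop := OrdEven a ↔ OrdEven b

/-- The Hausdorff difference operation `D_α`. -/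
def DOp {E : Type*} (α : Ordinal) (U : Ordinal → Set E) : Set E :=
  ⋃ β ∈ {β : Ordinal | β < α ∧ ¬ SameParity β α}, (U β \ ⋃ γ ∈ Set.Iio β, U γ)

/-- Membership in the Hausdorff difference class `D_α(E)`. -/
def MemD {E : Type*} (t : TopologicalSpace E) (α : Ordinal) (A : Set E) : Prop :=
  ∃ U : Ordinal → Set E, (∀ β < α, IsOpen[t] (U β)) ∧ A = DOp α U
/-- Wadge reducibility between families of subsets of ℕ (Scott topology). -/
def WadgeLe (A B : Set (Set ℕ)) : Prop :=
  ∃ f : Set ℕ → Set ℕ, Continuous[ScottPN, ScottPN] f ∧ A = f ⁻¹' B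

/-!
Code the ordinals `γ < α` injectively by nonzero naturals `c γ`. Let `𝒳` be the `D_α` set built
from the increasing opens "`S` contains the code of some `γ ≤ β`", and `ℋ` the one built from the
same opens enlarged by "`S` contains a non-code". A `D_α` set written with an increasing sequence
`U` reduces to `ℋ` via `X ↦ {c γ | X ∈ U γ}`, so `ℋ` is complete.

Now let `f` be a continuous, hence monotone, reduction of `𝒳` to `ℋ`. By induction on `β`, `f Y`
lies in no level `β` of `ℋ` below the least code index `η` of `Y`: otherwise enlarge `Y` to `Y'`
with least code index `β + 1`; `f Y'` is still in level `β` and, by induction, in no lower level,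
so membership of `Y'` in `𝒳` and of `f Y'` in `ℋ` are decided by the parities of `β + 1` and `β`,
which differ. Hence `f` sends every code-free set, in particular `∅` and `{0}`, to `∅`.
-/

open Ordinal Set

namespace Ordinal

theorem eq_zero_or_isSuccLimit_iff_omega0_dvd {l : Ordinal} :
    (l = 0 ∨ Order.IsSuccLimit l) ↔ ω ∣ l := by
  rw [Order.isSuccLimit_iff, ← isSuccPrelimit_iff_omega0_dvd, isMin_iff_eq_bot]
  rcases eq_or_ne l 0 with rfl | hl <;> simp [*]

end Ordinal

theorem ordEven_iff_mod_omega0 {o : Ordinal} :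
    OrdEven o ↔ ∃ n : ℕ, o % ω = ((2 * n : ℕ) : Ordinal) := by
  simp only [OrdEven, eq_zero_or_isSuccLimit_iff_omega0_dvd]
  constructor
  · rintro ⟨_, n, ⟨k, rfl⟩, rfl⟩
    refine ⟨n, ?_⟩
    rw [mul_add_mod_self]
    exact_mod_cast natCast_mod_omega0 (2 * n)
  · rintro ⟨n, hn⟩
    refine ⟨ω * (o / ω), n, dvd_mul_right _ _, ?_⟩
    conv_lhs => rw [← div_add_mod o ω, hn]
    push_cast
    rfl

theorem ordEven_iff_even {o : Ordinal} {m : ℕ} (h : o % ω = m) : OrdEven o ↔ Even m := by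
  simp only [ordEven_iff_mod_omega0, h, Nat.cast_inj, even_iff_two_dvd, dvd_def]

theorem ordEven_add_one_iff (o : Ordinal) : OrdEven (o + 1) ↔ ¬ OrdEven o := by
  obtain ⟨m, hm⟩ := lt_omega0.1 (mod_lt o omega0_ne_zero)
  have hm1 : (o + 1) % ω = ((m + 1 : ℕ) : Ordinal) := by
    conv_lhs => rw [← div_add_mod o ω, hm, add_assoc]
    rw [mul_add_mod_self]
    exact_mod_cast natCast_mod_omega0 (m + 1)
  rw [ordEven_iff_even hm, ordEven_iff_even hm1, Nat.even_add_one]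

theorem sameParity_add_one_iff (β α : Ordinal) : SameParity (β + 1) α ↔ ¬ SameParity β α := by
  unfold SameParity
  rw [ordEven_add_one_iff]
  tauto

attribute [local instance] ScottPN

namespace ScottPN

theorem isOpen_setOf_mem (n : ℕ) : IsOpen {S : Set ℕ | n ∈ S} :=
  TopologicalSpace.GenerateOpen.basic _ ⟨{n}, finite_singleton n, by simp⟩

theorem isUpperSet_of_isOpen {O : Set (Set ℕ)} (hO : IsOpen O) : IsUpperSet O := by
  have : Topology.upperSet (Set ℕ) ≤ ScottPN := by
    refine le_generateFrom ?_
    rintro _ ⟨A, -, rfl⟩ X Y hXY hX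
    exact hX.trans hXY
  exact this O hO

theorem monotone_of_continuous {f : Set ℕ → Set ℕ} (hf : Continuous f) : Monotone f :=
  fun _ _ hXY n hn => isUpperSet_of_isOpen ((isOpen_setOf_mem n).preimage hf) hXY hn

theorem continuous_of_isOpen_setOf_mem {f : Set ℕ → Set ℕ}
    (h : ∀ n : ℕ, IsOpen {X : Set ℕ | n ∈ f X}) : Continuous f := by
  refine continuous_generateFrom_iff.2 ?_
  rintro _ ⟨A, hA, rfl⟩
  have : f ⁻¹' {X | A ⊆ X} = ⋂ n ∈ A, {X | n ∈ f X} := by ext; simp [subset_def]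
  exact this ▸ hA.isOpen_biInter fun n _ => h n

end ScottPN

section DOp

variable {E F : Type*} {α : Ordinal} {U : Ordinal → Set E}

theorem mem_DOp {x : E} :
    x ∈ DOp α U ↔ ∃ β < α, ¬ SameParity β α ∧ x ∈ U β ∧ ∀ γ < β, x ∉ U γ := by
  simp only [DOp, mem_iUnion₂, mem_sdiff, mem_ofPred_eq, mem_Iio, exists_prop, and_assoc,
    not_exists, not_and]

theorem mem_DOp_iff_of_first {x : E} {δ : Ordinal} (hδα : δ ≤ α) (hδ : δ < α → x ∈ U δ)
    (hlow : ∀ γ < δ, x ∉ U γ) : x ∈ DOp α U ↔ ¬ SameParity δ α := by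
  rw [mem_DOp]
  constructor
  · rintro ⟨β, hβα, hpar, hxβ, hβlow⟩
    rcases lt_trichotomy β δ with h | rfl | h
    · exact absurd hxβ (hlow β h)
    · exact hpar
    · exact absurd (hδ (h.trans hβα)) (hβlow δ h)
  · intro hpar
    rcases hδα.lt_or_eq with h | rfl
    · exact ⟨δ, h, hpar, hδ h, hlow⟩
    · exact absurd Iff.rfl hpar

theorem DOp_congr {V : Ordinal → Set E} (h : ∀ β < α, U β = V β) : DOp α U = DOp α V := by
  ext x
  simp only [mem_DOp]
  refine exists_congr fun β => and_congr_right fun hβ => ?_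
  rw [h β hβ]
  refine and_congr_right' (and_congr_right' (forall₂_congr fun γ hγ => ?_))
  rw [h γ (hγ.trans hβ)]

theorem preimage_DOp (g : E → F) (V : Ordinal → Set F) :
    g ⁻¹' DOp α V = DOp α (fun β => g ⁻¹' V β) := by
  ext
  simp only [mem_preimage, mem_DOp]

theorem DOp_accumulate : DOp α (fun β => ⋃ γ ∈ Iic β, U γ) = DOp α U := by
  ext x
  simp only [mem_DOp, mem_iUnion, mem_Iic, exists_prop, not_exists, not_and]
  constructor
  · rintro ⟨β, hβα, hpar, ⟨δ, hδβ, hxδ⟩, hlow⟩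
    obtain rfl : δ = β := hδβ.eq_of_not_lt fun h => hlow δ h δ le_rfl hxδ
    exact ⟨δ, hβα, hpar, hxδ, fun γ hγ => hlow γ hγ γ le_rfl⟩
  · rintro ⟨β, hβα, hpar, hxβ, hlow⟩
    exact ⟨β, hβα, hpar, ⟨β, le_rfl, hxβ⟩, fun γ hγ δ hδγ => hlow δ (hδγ.trans_lt hγ)⟩

end DOp

section Codes

variable {c : Ordinal → ℕ} {α : Ordinal}

def codeUpTo (c : Ordinal → ℕ) (α β : Ordinal) : Set (Set ℕ) :=
  {S | ∃ γ ≤ β, γ < α ∧ c γ ∈ S}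

def containsNoncode (c : Ordinal → ℕ) (α : Ordinal) : Set (Set ℕ) :=
  {S | ∃ n ∈ S, ∀ γ < α, c γ ≠ n}

def codeFamily (c : Ordinal → ℕ) (α : Ordinal) : Set (Set ℕ) :=
  DOp α (codeUpTo c α)

def paddedCodeFamily (c : Ordinal → ℕ) (α : Ordinal) : Set (Set ℕ) :=
  DOp α (fun β => containsNoncode c α ∪ codeUpTo c α β)

/-- `η = α` means that `Y` contains no code at all. -/
def HasCodeRank (c : Ordinal → ℕ) (α η : Ordinal) (Y : Set ℕ) : Prop :=
  (η < α → c η ∈ Y) ∧ ∀ γ < η, c γ ∉ Y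

theorem isOpen_codeUpTo (β : Ordinal) : IsOpen (codeUpTo c α β) := by
  have : codeUpTo c α β = ⋃ γ ∈ {γ | γ ≤ β ∧ γ < α}, {S | c γ ∈ S} := by
    ext; simp [codeUpTo, and_assoc]
  exact this ▸ isOpen_biUnion fun γ _ => ScottPN.isOpen_setOf_mem (c γ)

theorem isOpen_containsNoncode : IsOpen (containsNoncode c α) := by
  have : containsNoncode c α = ⋃ n ∈ {n | ∀ γ < α, c γ ≠ n}, {S | n ∈ S} := by
    ext; simp [containsNoncode, and_comm]
  exact this ▸ isOpen_biUnion fun n _ => ScottPN.isOpen_setOf_mem n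

theorem memD_codeFamily : MemD ScottPN α (codeFamily c α) :=
  ⟨_, fun β _ => isOpen_codeUpTo β, rfl⟩

theorem memD_paddedCodeFamily : MemD ScottPN α (paddedCodeFamily c α) :=
  ⟨_, fun β _ => isOpen_containsNoncode.union (isOpen_codeUpTo β), rfl⟩

theorem HasCodeRank.exists_superset (hc : InjOn c (Iio α)) {η δ : Ordinal} {Y : Set ℕ}
    (hY : HasCodeRank c α η Y) (hηα : η ≤ α) (hδη : δ ≤ η) :
    ∃ Y' ⊇ Y, HasCodeRank c α δ Y' := by
  rcases hδη.lt_or_eq with hδη | rfl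
  · have hδα := hδη.trans_le hηα
    refine ⟨insert (c δ) Y, subset_insert _ _, fun _ => mem_insert _ _, fun γ hγ h => ?_⟩
    rcases h with h | h
    · exact hγ.ne (hc (hγ.trans hδα) hδα h)
    · exact hY.2 γ (hγ.trans hδη) h
  · exact ⟨Y, Subset.rfl, hY⟩

theorem mem_codeFamily_iff {η : Ordinal} {Y : Set ℕ} (hY : HasCodeRank c α η Y) (hηα : η ≤ α) :
    Y ∈ codeFamily c α ↔ ¬ SameParity η α :=
  mem_DOp_iff_of_first hηα (fun h => ⟨η, le_rfl, h, hY.1 h⟩)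
    fun _ hγη ⟨δ, hδγ, _, hδ⟩ => hY.2 δ (hδγ.trans_lt hγη) hδ

theorem notMem_of_lt_codeRank (hc : InjOn c (Iio α)) {W : Ordinal → Set (Set ℕ)}
    (hW : ∀ β < α, IsUpperSet (W β)) {f : Set ℕ → Set ℕ} (hf : Monotone f)
    (hred : codeFamily c α = f ⁻¹' DOp α W) (β : Ordinal) {η : Ordinal} {Y : Set ℕ}
    (hηα : η ≤ α) (hY : HasCodeRank c α η Y) (hβη : β < η) : f Y ∉ W β := by
  induction β using WellFoundedLT.induction generalizing η Y with
  | _ β IH =>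
  intro hfY
  have hβα : β < α := hβη.trans_le hηα
  have hβ1η : β + 1 ≤ η := Order.add_one_le_of_lt hβη
  have hβ1 : β + 1 ≤ α := hβ1η.trans hηα
  obtain ⟨Y', hYY', hY'⟩ := hY.exists_superset hc hηα hβ1η
  have hfY' : f Y' ∈ W β := hW β hβα (hf hYY') hfY
  have hlayer : f Y' ∈ DOp α W ↔ ¬ SameParity β α :=
    mem_DOp_iff_of_first hβα.le (fun _ => hfY')
      fun γ hγ => IH γ hγ hβ1 hY' (hγ.trans (Order.lt_add_one_iff.2 le_rfl))
  have hcode := mem_codeFamily_iff hY' hβ1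
  rw [hred, mem_preimage, hlayer, sameParity_add_one_iff] at hcode
  exact iff_not_self hcode

theorem eq_empty_of_forall_code_notMem (hα : 1 ≤ α) (hc : InjOn c (Iio α))
    {f : Set ℕ → Set ℕ} (hf : Continuous f)
    (hred : codeFamily c α = f ⁻¹' paddedCodeFamily c α)
    {X : Set ℕ} (hX : ∀ γ < α, c γ ∉ X) : f X = ∅ := by
  have hnot : ∀ β < α, f X ∉ containsNoncode c α ∪ codeUpTo c α β :=
    fun β hβ => notMem_of_lt_codeRank hc
      (fun β _ => ScottPN.isUpperSet_of_isOpen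
        (isOpen_containsNoncode.union (isOpen_codeUpTo β)))
      (ScottPN.monotone_of_continuous hf) hred β le_rfl
      ⟨fun h => absurd h (lt_irrefl α), hX⟩ hβ
  refine eq_empty_of_forall_notMem fun n hn => ?_
  by_cases hcode : ∃ γ < α, c γ = n
  · obtain ⟨γ, hγ, rfl⟩ := hcode
    exact hnot γ hγ (Or.inr ⟨γ, le_rfl, hγ, hn⟩)
  · push Not at hcode
    exact hnot 0 (zero_lt_one.trans_le hα) (Or.inl ⟨n, hn, hcode⟩)

theorem wadgeLe_paddedCodeFamily_of_monotone (hc : InjOn c (Iio α))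
    {U : Ordinal → Set (Set ℕ)} (hU : Monotone U) (hUo : ∀ β < α, IsOpen (U β)) :
    WadgeLe (DOp α U) (paddedCodeFamily c α) := by
  set f : Set ℕ → Set ℕ := fun X => c '' {γ | γ < α ∧ X ∈ U γ}
  have hf : Continuous f := by
    refine ScottPN.continuous_of_isOpen_setOf_mem fun n => ?_
    have : {X | n ∈ f X} = ⋃ γ ∈ {γ | γ < α ∧ c γ = n}, U γ := by
      ext X
      simp only [f, mem_image, mem_ofPred_eq, mem_iUnion₂, exists_prop]
      exact exists_congr fun γ => by tauto
    exact this ▸ isOpen_biUnion fun γ hγ => hUo γ hγ.1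
  have hpre : ∀ β < α, f ⁻¹' (containsNoncode c α ∪ codeUpTo c α β) = U β := by
    intro β hβ
    ext X
    constructor
    · rintro (⟨_, ⟨γ, ⟨hγ, -⟩, rfl⟩, hnc⟩ | ⟨γ, hγβ, -, δ, ⟨hδ, hXδ⟩, hδγ⟩)
      · exact absurd rfl (hnc γ hγ)
      · rw [← hc hδ (hγβ.trans_lt hβ) hδγ] at hγβ
        exact hU hγβ hXδ
    · exact fun hX => Or.inr ⟨β, le_rfl, hβ, β, ⟨hβ, hX⟩, rfl⟩
  refine ⟨f, hf, ?_⟩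
  rw [paddedCodeFamily, preimage_DOp]
  exact DOp_congr fun β hβ => (hpre β hβ).symm

theorem wadgeLe_paddedCodeFamily (hc : InjOn c (Iio α)) {A : Set (Set ℕ)}
    (hA : MemD ScottPN α A) : WadgeLe A (paddedCodeFamily c α) := by
  obtain ⟨U, hUo, rfl⟩ := hA
  rw [← DOp_accumulate]
  exact wadgeLe_paddedCodeFamily_of_monotone hc
    (fun _ _ h => biUnion_subset_biUnion_left (Iic_subset_Iic.2 h))
    fun β hβ => isOpen_biUnion fun γ hγ => hUo γ (hγ.trans_lt hβ)

end Codes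

theorem exists_injOn_ne_zero {α : Ordinal} (h : α.card ≤ Cardinal.aleph0) :
    ∃ c : Ordinal → ℕ, InjOn c (Iio α) ∧ ∀ γ, c γ ≠ 0 := by
  have : Countable (Iio α) := by
    rw [← Cardinal.mk_le_aleph0_iff, Cardinal.mk_Iio_ordinal]
    exact (Cardinal.lift_le.2 h).trans_eq Cardinal.lift_aleph0
  obtain ⟨e⟩ := nonempty_embedding_nat (Iio α)
  refine ⟨fun γ => if h : γ < α then e ⟨γ, h⟩ + 1 else 1, fun β hβ γ hγ h => ?_, fun γ => ?_⟩
  · simpa [dif_pos (show β < α from hβ), dif_pos (show γ < α from hγ)] using h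
  · dsimp only
    split_ifs <;> simp

/-- For every countable ordinal `α ≥ 1` there is a family which is Wadge
complete for `D_α(𝒫(ℕ))` but not one-to-one Wadge complete. -/
theorem exists_wadge_complete_not_one_one_complete
    (α : Ordinal) (h1 : 1 ≤ α) (h2 : α.card ≤ Cardinal.aleph0) :
    ∃ H : Set (Set ℕ), MemD ScottPN α H ∧
      (∀ A : Set (Set ℕ), MemD ScottPN α A → WadgeLe A H) ∧
      ∃ A : Set (Set ℕ), MemD ScottPN α A ∧
        ¬ ∃ f : Set ℕ → Set ℕ, Continuous[ScottPN, ScottPN] f ∧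
            Function.Injective f ∧ A = f ⁻¹' H := by
  obtain ⟨c, hc, hc0⟩ := exists_injOn_ne_zero h2
  refine ⟨paddedCodeFamily c α, memD_paddedCodeFamily, fun A => wadgeLe_paddedCodeFamily hc,
    codeFamily c α, memD_codeFamily, ?_⟩
  rintro ⟨f, hf, hinj, hred⟩
  have hempty := eq_empty_of_forall_code_notMem h1 hc hf hred fun γ _ => notMem_empty (c γ)
  have hzero :=
    eq_empty_of_forall_code_notMem h1 hc hf hred fun γ _ h => hc0 γ (mem_singleton_iff.1 h)
  exact singleton_ne_empty 0 (hinj (hzero.trans hempty.symm))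
end

section
/- Limits on reducibility to the family of finite sets in the Scott domain: (1) if 𝒪 ⊆ 𝒫(ℕ) is a nonempty Scott-open family with 𝒪 ≠ 𝒫(ℕ), then there is no continuous f : 𝒫(ℕ) → 𝒫(ℕ) with 𝒪 = f⁻¹(𝒫_{<ω}(ℕ)); (2) no subfamily 𝒳 ⊆ 𝒫_{<ω}(ℕ) is Wadge hard for Σ⁰₂(𝒫(ℕ)), i.e., for every 𝒳 ⊆ 𝒫_{<ω}(ℕ) there exists a family in Σ⁰₂(𝒫(ℕ)) that is not Wadge reducible to 𝒳. -/
open Topology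

/-- Membership in `Σ⁰₂(E)`: countable unions of differences of open sets. -/
def MemSigma2 {E : Type*} (t : TopologicalSpace E) (A : Set E) : Prop :=
  ∃ U V : ℕ → Set E, (∀ n, IsOpen[t] (U n)) ∧ (∀ n, IsOpen[t] (V n)) ∧
    A = ⋃ n, U n \ V n
/-!
Scott-open families are upward closed and Scott-continuous maps are monotone, while the family
of finite sets is downward closed. So `f ⁻¹' {finite}` is both an upper and a lower set, and a
nonempty such family contains `univ` and is everything.

A reduction `f` of `A` to a family of finite sets is monotone; along a chain `E₀ ⊆ E₁ ⊆ ⋯` whose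
membership in `A` alternates, the images `f Eₙ` must strictly increase. If the chain is bounded
by some `Y ∈ A`, they all lie in the finite set `f Y`, which is impossible. The `Σ⁰₂` family
`pairGap` has such a chain, namely `[2, n + 2)`, bounded by `{1}ᶜ`.
-/

open Set

theorem isUpperSet_of_isOpen_scottPN {W : Set (Set ℕ)} (hW : IsOpen[ScottPN] W) :
    IsUpperSet W := by
  induction hW with
  | basic O hO =>
    obtain ⟨A, -, rfl⟩ := hO
    exact fun _ _ hXY hX => hX.trans hXY
  | univ => exact isUpperSet_univ
  | inter _ _ _ _ ih₁ ih₂ => exact ih₁.inter ih₂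
  | sUnion _ _ ih => exact isUpperSet_sUnion ih

theorem isOpen_scottPN_setOf_mem (a : ℕ) : IsOpen[ScottPN] {X : Set ℕ | a ∈ X} :=
  TopologicalSpace.GenerateOpen.basic _ ⟨{a}, finite_singleton a, by simp⟩

theorem monotone_of_continuous_scottPN {f : Set ℕ → Set ℕ}
    (hf : Continuous[ScottPN, ScottPN] f) : Monotone f := fun _ _ hXY a ha =>
  isUpperSet_of_isOpen_scottPN
    (@Continuous.isOpen_preimage _ _ ScottPN ScottPN f hf _ (isOpen_scottPN_setOf_mem a)) hXY ha

theorem isLowerSet_setOf_finite (β : Type*) : IsLowerSet {X : Set β | X.Finite} :=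
  fun _ _ hXY hX => hX.subset hXY

theorem infinite_of_strictMono_of_forall_subset {β : Type*} {g : ℕ → Set β}
    (hg : StrictMono g) {S : Set β} (hS : ∀ n, g n ⊆ S) : S.Infinite := fun hfin =>
  infinite_range_of_injective hg.injective <|
    hfin.finite_subsets.subset (range_subset_iff.2 hS)

theorem not_wadgeLe_of_alternating_chain {A C : Set (Set ℕ)}
    (hC : C ⊆ {X : Set ℕ | X.Finite}) {E : ℕ → Set ℕ} (hE : Monotone E)
    (halt : ∀ n, E n ∈ A ↔ E (n + 1) ∉ A) {Y : Set ℕ} (hY : Y ∈ A) (hEY : ∀ n, E n ⊆ Y) :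
    ¬ WadgeLe A C := by
  rintro ⟨f, hf, rfl⟩
  have hfmono := monotone_of_continuous_scottPN hf
  have hstrict : StrictMono (f ∘ E) := strictMono_nat_of_lt_succ fun n =>
    (hfmono (hE n.le_succ)).lt_of_ne fun heq => by
      have := halt n
      simp only [mem_preimage, heq] at this
      exact iff_not_self this
  exact infinite_of_strictMono_of_forall_subset hstrict (fun n => hfmono (hEY n))
    (hC hY)

def pairGap : Set (Set ℕ) := ⋃ m, {X | 2 * m ∈ X} \ {X | 2 * m + 1 ∈ X}

theorem memSigma2_pairGap : MemSigma2 ScottPN pairGap :=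
  ⟨_, _, fun m => isOpen_scottPN_setOf_mem (2 * m),
    fun m => isOpen_scottPN_setOf_mem (2 * m + 1), rfl⟩

theorem mem_pairGap {X : Set ℕ} : X ∈ pairGap ↔ ∃ m, 2 * m ∈ X ∧ 2 * m + 1 ∉ X := by
  simp [pairGap]

theorem Ico_mem_pairGap_iff (n : ℕ) : Ico 2 (n + 2) ∈ pairGap ↔ Odd n := by
  simp only [mem_pairGap, mem_Ico, not_and, not_lt]
  constructor
  · rintro ⟨m, hm, hgap⟩
    exact ⟨m - 1, by omega⟩
  · rintro ⟨k, rfl⟩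
    exact ⟨k + 1, by omega, by omega⟩

theorem compl_singleton_one_mem_pairGap : ({1}ᶜ : Set ℕ) ∈ pairGap :=
  mem_pairGap.2 ⟨0, by simp⟩

/-- Limits on reducibility to the family of finite sets in `𝒫(ℕ)`:
no nonempty proper Scott-open family reduces to it, and no subfamily of it is
Wadge hard for `Σ⁰₂(𝒫(ℕ))`. -/
theorem finite_sets_reduction_limits :
    (∀ O : Set (Set ℕ), IsOpen[ScottPN] O → O.Nonempty → O ≠ Set.univ →
      ¬ ∃ f : Set ℕ → Set ℕ, Continuous[ScottPN, ScottPN] f ∧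
          O = f ⁻¹' {X : Set ℕ | X.Finite}) ∧
    (∀ C : Set (Set ℕ), C ⊆ {X : Set ℕ | X.Finite} →
      ∃ A : Set (Set ℕ), MemSigma2 ScottPN A ∧ ¬ WadgeLe A C) := by
  refine ⟨?_, fun C hC => ⟨pairGap, memSigma2_pairGap, ?_⟩⟩
  · rintro O hO hne hne_univ ⟨f, hf, rfl⟩
    have hlower := (isLowerSet_setOf_finite ℕ).preimage (monotone_of_continuous_scottPN hf)
    exact hne_univ (hlower.top_mem.1 ((isUpperSet_of_isOpen_scottPN hO).top_mem.2 hne))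
  · refine not_wadgeLe_of_alternating_chain hC (E := fun n => Ico 2 (n + 2))
      (fun _ _ h => Ico_subset_Ico_right (Nat.add_le_add_right h 2)) (fun n => ?_)
      compl_singleton_one_mem_pairGap (fun _ _ hk => (Nat.lt_of_succ_le (mem_Ico.1 hk).1).ne')
    rw [Ico_mem_pairGap_iff, Ico_mem_pairGap_iff, Nat.odd_add_one, not_not]
end
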